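/- If sequences y1 and y2 in (ℝ^d)^n are at slack distance at most (s, ε) and y2 and y3 are at slack distance at most (s', ε'), then y1 and y3 are at slack distance at most (s + s', ε + ε'). -/

import Mathlib

/-!
Both alignments are restricted to the overlap `[a, b)` of their windows in `y2`. Inside `[0, n)`
that overlap has length at least `m + m' - n ≥ n - s - s'`, and along it the triangle inequality
through `y2` adds the two errors. When `n ≤ s + s'` the empty window already witnesses the claim.
-/

/-- `y1` and `y2` are at slack distance at most `(t, ε)`: some subwindows of common
length `m ≥ n - t` are pointwise within distance `ε`. -/
def SlackDist {n d : ℕ} (y1 y2 : Fin n → EuclideanSpace ℝ (Fin d)) (t : ℕ) (ε : ℝ) : Prop :=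
  ∃ i j m : ℕ, n - t ≤ m ∧ i + m ≤ n ∧ j + m ≤ n ∧
    ∀ k, k < m → ∀ (h1 : i + k < n) (h2 : j + k < n),
      dist (y1 ⟨i + k, h1⟩) (y2 ⟨j + k, h2⟩) ≤ ε

section WindowsClose

variable {α : Type*} [PseudoMetricSpace α] {n : ℕ} {x y z : Fin n → α} {i j l m : ℕ} {ε ε' : ℝ}

def WindowsClose (x y : Fin n → α) (i j m : ℕ) (ε : ℝ) : Prop :=
  ∀ k, k < m → ∀ (h1 : i + k < n) (h2 : j + k < n), dist (x ⟨i + k, h1⟩) (y ⟨j + k, h2⟩) ≤ ε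

theorem WindowsClose.shrink (h : WindowsClose x y i j m ε) {p q : ℕ} (hpq : p + q ≤ m) :
    WindowsClose x y (i + p) (j + p) q ε := by
  intro k hk h1 h2
  simpa only [Nat.add_assoc] using h (p + k) (by omega) (by omega) (by omega)

theorem WindowsClose.trans (h : WindowsClose x y i j m ε) (h' : WindowsClose y z j l m ε')
    (hjm : j + m ≤ n) : WindowsClose x z i l m (ε + ε') := by
  intro k hk h1 h2
  have hj : j + k < n := by omega
  calc dist (x ⟨i + k, h1⟩) (z ⟨l + k, h2⟩)
      ≤ dist (x ⟨i + k, h1⟩) (y ⟨j + k, hj⟩) + dist (y ⟨j + k, hj⟩) (z ⟨l + k, h2⟩) :=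
        dist_triangle _ _ _
    _ ≤ ε + ε' := add_le_add (h k hk h1 hj) (h' k hk hj h2)

end WindowsClose

theorem slack_triangle {n d : ℕ} (y1 y2 y3 : Fin n → EuclideanSpace ℝ (Fin d))
    (s s' : ℕ) (ε ε' : ℝ)
    (h12 : SlackDist y1 y2 s ε) (h23 : SlackDist y2 y3 s' ε') :
    SlackDist y1 y3 (s + s') (ε + ε') := by
  by_cases hn : n ≤ s + s'
  · exact ⟨0, 0, 0, by omega, by omega, by omega, fun k hk => absurd hk k.not_lt_zero⟩
  obtain ⟨i, j, m, hm, him, hjm, h12⟩ := h12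
  obtain ⟨i', j', m', hm', him', hjm', h23⟩ := h23
  set a := max j i'
  set b := min (j + m) (i' + m')
  have h12' : WindowsClose y1 y2 (i + (a - j)) a (b - a) ε := by
    simpa only [show j + (a - j) = a by omega] using
      WindowsClose.shrink h12 (p := a - j) (q := b - a) (by omega)
  have h23' : WindowsClose y2 y3 a (j' + (a - i')) (b - a) ε' := by
    simpa only [show i' + (a - i') = a by omega] using
      WindowsClose.shrink h23 (p := a - i') (q := b - a) (by omega)
  exact ⟨_, _, b - a, by omega, by omega, by omega, h12'.trans h23' (by omega)⟩
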